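/- arXiv:1905.00073 — 2 statements merged into one kernel-verified Lean document; each statement's English description precedes it below -/
import Mathlib

section
/- Let A, B ⊆ F^n be linear codes with trivial hulls. Then B = A·X for a permutation matrix X if and only if Σ_B = Xᵀ·Σ_A·X, where Σ_A and Σ_B are the projection matrices Gᵀ(G·Gᵀ)⁻¹G built from generator matrices of A and B respectively. -/
open Matrix

/-- The orthogonal complement (dual code) of a linear code `U ⊆ F^n` with respect to the
standard bilinear form `⟨x, y⟩ = ∑ i, x i * y i`. -/
def dualCode {F : Type*} [Field F] {n : ℕ} (U : Submodule F (Fin n → F)) :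
    Submodule F (Fin n → F) where
  carrier := {z | ∀ u ∈ U, ∑ i, u i * z i = 0}
  add_mem' := by
    intro a b ha hb u hu
    have h1 := ha u hu
    have h2 := hb u hu
    simp only [Set.mem_setOf_eq] at *
    calc ∑ i, u i * (a + b) i = (∑ i, u i * a i) + ∑ i, u i * b i := by
          rw [← Finset.sum_add_distrib]
          exact Finset.sum_congr rfl fun i _ => by simp [mul_add]
      _ = 0 := by rw [h1, h2, add_zero]
  zero_mem' := by
    intro u hu
    simp
  smul_mem' := by
    intro c a ha u hu
    have h := ha u hu
    simp only [Set.mem_setOf_eq] at *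
    calc ∑ i, u i * (c • a) i = c * ∑ i, u i * a i := by
          rw [Finset.mul_sum]
          exact Finset.sum_congr rfl fun i _ => by simp [smul_eq_mul]; ring
      _ = 0 := by rw [h, mul_zero]

/-!
If `U` has trivial hull, the Gram matrix `G Gᵀ` of a generator matrix `G` is invertible, since a
vector `c G` with `c G Gᵀ = 0` lies in `U ∩ U⊥`. Then `G Σ_U = G`, so `Σ_U` has row space `U`;
and `Σ_U` is unchanged when `G` is replaced by `M G` with `M` invertible. A permutation matrix
`X` satisfies `X Xᵀ = 1`, so `G X` generates `U X` and has projection matrix `Xᵀ Σ_U X`; this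
gives `B = A X → Σ_B = Xᵀ Σ_A X`. Conversely, comparing row spaces of `Σ_B = Xᵀ Σ_A X` gives
`B = A X`.
-/

namespace Matrix

section RowSpace

variable {R : Type*} [CommRing R] {l m n : Type*} [Fintype m]

theorem span_range_mul [Fintype l] (M : Matrix l m R) (N : Matrix m n R) :
    Submodule.span R (Set.range (M * N).row) =
      (Submodule.span R (Set.range M.row)).map N.vecMulLinear := by
  rw [← range_vecMulLinear, ← range_vecMulLinear, ← LinearMap.range_comp]
  congr 1
  ext v : 1
  simp [vecMul_vecMul]

theorem span_range_mul_le [Fintype l] (M : Matrix l m R) (N : Matrix m n R) :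
    Submodule.span R (Set.range (M * N).row) ≤ Submodule.span R (Set.range N.row) := by
  rw [span_range_mul, ← range_vecMulLinear N]
  exact LinearMap.map_le_range

theorem exists_eq_mul_of_span_range_le {M : Matrix l n R} {N : Matrix m n R}
    (h : Submodule.span R (Set.range M.row) ≤ Submodule.span R (Set.range N.row)) :
    ∃ C : Matrix l m R, M = C * N := by
  have hrow (i : l) : ∃ c, c ᵥ* N = M.row i := by
    have hi := h (Submodule.subset_span ⟨i, rfl⟩)
    rwa [← range_vecMulLinear, LinearMap.mem_range] at hi
  choose c hc using hrow
  refine ⟨Matrix.of c, ?_⟩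
  ext i j
  rw [mul_apply_eq_vecMul]
  exact (congrFun (hc i) j).symm

theorem span_range_mul_of_isUnit [DecidableEq m] {M : Matrix m m R} (hM : IsUnit M)
    (N : Matrix m n R) :
    Submodule.span R (Set.range (M * N).row) = Submodule.span R (Set.range N.row) := by
  have hM_top : Submodule.span R (Set.range M.row) = ⊤ := by
    rw [← range_vecMulLinear, LinearMap.range_eq_top]
    exact vecMul_surjective_iff_isUnit.mpr hM
  rw [span_range_mul, hM_top, Submodule.map_top, range_vecMulLinear]

end RowSpace

section ProjMatrix

variable {R : Type*} [CommRing R] {m n : Type*} [Fintype m] [DecidableEq m] [Fintype n]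

/-- The paper's `Σ_U` for `U` the row space of `G`. It is only meaningful when the Gram matrix
`G Gᵀ` is invertible: otherwise `(G Gᵀ)⁻¹` is the junk value `0`. -/
noncomputable def projMatrix (G : Matrix m n R) : Matrix n n R :=
  Gᵀ * (G * Gᵀ)⁻¹ * G

theorem mul_projMatrix {G : Matrix m n R} (hG : IsUnit (G * Gᵀ)) : G * projMatrix G = G := by
  rw [projMatrix, ← Matrix.mul_assoc, ← Matrix.mul_assoc, mul_nonsing_inv _
    ((isUnit_iff_isUnit_det _).mp hG), Matrix.one_mul]

theorem span_range_projMatrix {G : Matrix m n R} (hG : IsUnit (G * Gᵀ)) :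
    Submodule.span R (Set.range (projMatrix G).row) = Submodule.span R (Set.range G.row) := by
  refine le_antisymm (span_range_mul_le _ _) ?_
  conv_lhs => rw [← mul_projMatrix hG]
  exact span_range_mul_le _ _

theorem projMatrix_mul_left_of_isUnit {M : Matrix m m R} (hM : IsUnit M) (G : Matrix m n R) :
    projMatrix (M * G) = projMatrix G := by
  have hMdet : IsUnit M.det := (isUnit_iff_isUnit_det M).mp hM
  have hMTdet : IsUnit Mᵀ.det := by rwa [det_transpose]
  have hgram : M * G * (M * G)ᵀ = M * (G * Gᵀ) * Mᵀ := by
    simp only [transpose_mul, Matrix.mul_assoc]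
  rw [projMatrix, projMatrix, hgram, mul_inv_rev, mul_inv_rev, transpose_mul]
  simp only [Matrix.mul_assoc]
  rw [mul_nonsing_inv_cancel_left _ _ hMTdet, nonsing_inv_mul_cancel_left _ _ hMdet]

theorem projMatrix_mul_right_of_mul_transpose_eq_one [DecidableEq n] {X : Matrix n n R}
    (hX : X * Xᵀ = 1) (G : Matrix m n R) : projMatrix (G * X) = Xᵀ * projMatrix G * X := by
  have hgram : G * X * (G * X)ᵀ = G * Gᵀ := by
    rw [transpose_mul, Matrix.mul_assoc, ← Matrix.mul_assoc X, hX, Matrix.one_mul]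
  rw [projMatrix, projMatrix, hgram, transpose_mul]
  simp only [Matrix.mul_assoc]

omit [Fintype n] in
theorem isUnit_of_linearIndependent_mul {K : Type*} [Field K] {M : Matrix m m K}
    {G : Matrix m n K} (h : LinearIndependent K (M * G).row) : IsUnit M := by
  rw [← vecMul_injective_iff_isUnit]
  intro c d hcd
  apply vecMul_injective_iff.mpr h
  simp only [← vecMul_vecMul, hcd]

theorem projMatrix_eq_of_span_range_eq {K : Type*} [Field K] {G G' : Matrix m n K}
    (hG : LinearIndependent K G.row)
    (h : Submodule.span K (Set.range G.row) = Submodule.span K (Set.range G'.row)) :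
    projMatrix G = projMatrix G' := by
  obtain ⟨M, rfl⟩ := exists_eq_mul_of_span_range_le h.le
  exact projMatrix_mul_left_of_isUnit (isUnit_of_linearIndependent_mul hG) G'

end ProjMatrix

theorem permMatrix_mul_transpose {R : Type*} [CommRing R] {n : Type*} [Fintype n]
    [DecidableEq n] (σ : Equiv.Perm n) : σ.permMatrix R * (σ.permMatrix R)ᵀ = 1 := by
  rw [transpose_permMatrix, ← permMatrix_mul, inv_mul_cancel, permMatrix_one]

end Matrix

section DualCode

variable {F : Type*} [Field F] {m : Type*} [Fintype m] {n : ℕ}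

theorem mem_dualCode_span_range_iff (G : Matrix m (Fin n) F) (v : Fin n → F) :
    v ∈ dualCode (Submodule.span F (Set.range G.row)) ↔ G *ᵥ v = 0 := by
  constructor
  · intro hv
    ext i
    exact hv (G i) (Submodule.subset_span ⟨i, rfl⟩)
  · intro hv u hu
    rw [← range_vecMulLinear] at hu
    obtain ⟨c, rfl⟩ := hu
    change (c ᵥ* G) ⬝ᵥ v = 0
    rw [← dotProduct_mulVec, hv, dotProduct_zero]

theorem isUnit_mul_transpose_of_inf_dualCode_eq_bot [DecidableEq m] {G : Matrix m (Fin n) F}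
    {U : Submodule F (Fin n → F)} (hG : LinearIndependent F G.row)
    (hspan : Submodule.span F (Set.range G.row) = U) (hU : U ⊓ dualCode U = ⊥) :
    IsUnit (G * Gᵀ) := by
  rw [← vecMul_injective_iff_isUnit, ← coe_vecMulLinear, ← LinearMap.ker_eq_bot,
    LinearMap.ker_eq_bot']
  intro c hc
  have hmem : c ᵥ* G ∈ U ⊓ dualCode U := by
    subst hspan
    refine Submodule.mem_inf.mpr
      ⟨range_vecMulLinear G ▸ LinearMap.mem_range_self G.vecMulLinear c, ?_⟩
    rw [mem_dualCode_span_range_iff, ← vecMul_transpose, vecMul_vecMul]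
    exact hc
  rw [hU, Submodule.mem_bot] at hmem
  exact vecMul_injective_iff.mpr hG (hmem.trans (zero_vecMul G).symm)

end DualCode

/-- Let `A, B ⊆ F^n` be linear codes with trivial hulls, with generator
matrices `G_A, G_B`, and let `X` be a permutation matrix. Then `B = A·X` if and only if
`Σ_B = Xᵀ Σ_A X`, where `Σ_U = G_Uᵀ (G_U G_Uᵀ)⁻¹ G_U`. -/
theorem statement10 {F : Type*} [Field F] {n k : ℕ}
    (A B : Submodule F (Fin n → F))
    (GA GB : Matrix (Fin k) (Fin n) F)
    (hAind : LinearIndependent F GA)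
    (hAspan : Submodule.span F (Set.range GA) = A)
    (hBind : LinearIndependent F GB)
    (hBspan : Submodule.span F (Set.range GB) = B)
    (hAhull : A ⊓ dualCode A = ⊥)
    (hBhull : B ⊓ dualCode B = ⊥)
    (σ : Equiv.Perm (Fin n)) :
    B = Submodule.map (Matrix.vecMulLinear (σ.permMatrix F)) A ↔
      GBᵀ * (GB * GBᵀ)⁻¹ * GB =
        (σ.permMatrix F)ᵀ * (GAᵀ * (GA * GAᵀ)⁻¹ * GA) * σ.permMatrix F := by
  have hA : Submodule.span F (Set.range GA.row) = A := hAspan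
  have hB : Submodule.span F (Set.range GB.row) = B := hBspan
  set X := σ.permMatrix F
  have hX : X * Xᵀ = 1 := permMatrix_mul_transpose σ
  change B = A.map X.vecMulLinear ↔ projMatrix GB = Xᵀ * projMatrix GA * X
  constructor
  · intro hBA
    rw [← projMatrix_mul_right_of_mul_transpose_eq_one hX]
    exact projMatrix_eq_of_span_range_eq hBind (by rw [span_range_mul, hA, hB, hBA])
  · intro hproj
    have hGA := isUnit_mul_transpose_of_inf_dualCode_eq_bot hAind hA hAhull
    have hGB := isUnit_mul_transpose_of_inf_dualCode_eq_bot hBind hB hBhull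
    have hXT : IsUnit Xᵀ := (isUnit_transpose X).mpr (IsUnit.of_mul_eq_one _ hX)
    rw [← hB, ← hA, ← span_range_projMatrix hGB, hproj, span_range_mul,
      span_range_mul_of_isUnit hXT, span_range_projMatrix hGA]
end

section
/- Let U ⊆ F^n have trivial hull with generator matrix G (k×n) and parity check matrix H ((n−k)×n). Then the block matrix M with first k rows G and last n−k rows H is invertible, and its inverse is the n×n matrix [Gᵀ(G·Gᵀ)⁻¹ | Hᵀ(H·Hᵀ)⁻¹] (horizontal concatenation of the two blocks). -/
/-!
Trivial hull and the dimension count `k + l = n` give `F^n = U ⊕ U⊥`, so a vector killed by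
both `G` and `H` is zero. If `G Gᵀ x = 0`, then `Gᵀ x` is killed by `G`, and by `H` because
`H Gᵀ = 0`; hence `Gᵀ x = 0` and `x = 0` by independence of the rows. So both Gram matrices are
invertible, and with `G Hᵀ = 0` the block product is the identity; a one-sided inverse of a
square matrix is two-sided.
-/

open Matrix

section

variable {R ι κ m : Type*} [Fintype m]

theorem eq_zero_of_forall_mem_dotProduct_eq_zero [CommSemiring R] {s : Set (m → R)}
    (hs : Submodule.span R s = ⊤) {v : m → R} (h : ∀ w ∈ s, w ⬝ᵥ v = 0) : v = 0 := by
  have hzero : (dotProductBilin R R).flip v = 0 := LinearMap.ext_on hs h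
  refine dotProduct_eq_zero v fun w => ?_
  rw [dotProduct_comm]
  exact LinearMap.congr_fun hzero w

theorem eq_zero_of_mulVec_eq_zero_of_sup_span_eq_top [CommSemiring R]
    {G : Matrix ι m R} {H : Matrix κ m R}
    (hspan : Submodule.span R (Set.range G) ⊔ Submodule.span R (Set.range H) = ⊤)
    {v : m → R} (hG : G *ᵥ v = 0) (hH : H *ᵥ v = 0) : v = 0 := by
  rw [← Submodule.span_union] at hspan
  refine eq_zero_of_forall_mem_dotProduct_eq_zero hspan ?_
  rintro w (⟨i, rfl⟩ | ⟨j, rfl⟩)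
  exacts [congrFun hG i, congrFun hH j]

theorem isUnit_det_mul_transpose [Field R] [Fintype ι] [DecidableEq ι] {A : Matrix ι m R}
    (hA : LinearIndependent R A) (h : ∀ x, A *ᵥ (Aᵀ *ᵥ x) = 0 → Aᵀ *ᵥ x = 0) :
    IsUnit (A * Aᵀ).det := by
  rw [isUnit_iff_ne_zero, Ne, ← exists_mulVec_eq_zero_iff]
  rintro ⟨x, hx, hAAx⟩
  rw [← mulVec_mulVec] at hAAx
  have hxA : x ᵥ* A = 0 ᵥ* A := by rw [← mulVec_transpose, h x hAAx, zero_vecMul]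
  exact hx (vecMul_injective_iff.2 hA hxA)

theorem fromRows_mul_fromCols_transpose_mul_inv [CommRing R] [Fintype ι] [Fintype κ]
    [DecidableEq ι] [DecidableEq κ] {A : Matrix ι m R} {B : Matrix κ m R}
    (hAB : A * Bᵀ = 0) (hA : IsUnit (A * Aᵀ).det) (hB : IsUnit (B * Bᵀ).det) :
    fromRows A B * fromCols (Aᵀ * (A * Aᵀ)⁻¹) (Bᵀ * (B * Bᵀ)⁻¹) = 1 := by
  have hBA : B * Aᵀ = 0 := by rw [← transpose_transpose B, ← transpose_mul, hAB, transpose_zero]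
  simp only [fromRows_mul_fromCols, ← Matrix.mul_assoc, mul_nonsing_inv _ hA,
    mul_nonsing_inv _ hB, hAB, hBA, Matrix.zero_mul, fromBlocks_one]

end

theorem mul_transpose_eq_zero_of_mem_dualCode {F ι κ : Type*} [Field F] [Fintype ι] [Fintype κ]
    {n : ℕ} {U : Submodule F (Fin n → F)} {G : Matrix ι (Fin n) F} {H : Matrix κ (Fin n) F}
    (hG : ∀ i, G i ∈ U) (hH : ∀ j, H j ∈ dualCode U) : G * Hᵀ = 0 := by
  ext i j
  exact hH j (G i) (hG i)

/-- Let `U ⊆ F^n` have trivial hull with generator matrix `G` (`k × n`)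
and parity check matrix `H` (`l × n`, `k + l = n`). Then the block matrix `M` stacking `G`
over `H` is invertible, with inverse the horizontal concatenation
`[Gᵀ (G Gᵀ)⁻¹ | Hᵀ (H Hᵀ)⁻¹]`. -/
theorem statement18 {F : Type*} [Field F] {n k l : ℕ} (hn : k + l = n)
    (U : Submodule F (Fin n → F))
    (G : Matrix (Fin k) (Fin n) F) (H : Matrix (Fin l) (Fin n) F)
    (hGind : LinearIndependent F G)
    (hGspan : Submodule.span F (Set.range G) = U)
    (hHind : LinearIndependent F H)
    (hHspan : Submodule.span F (Set.range H) = dualCode U)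
    (hhull : U ⊓ dualCode U = ⊥) :
    Matrix.fromRows G H *
        Matrix.fromCols (Gᵀ * (G * Gᵀ)⁻¹) (Hᵀ * (H * Hᵀ)⁻¹) = 1 ∧
    Matrix.fromCols (Gᵀ * (G * Gᵀ)⁻¹) (Hᵀ * (H * Hᵀ)⁻¹) *
        Matrix.fromRows G H = 1 := by
  have hGU : ∀ i, G i ∈ U := fun i => hGspan ▸ Submodule.subset_span ⟨i, rfl⟩
  have hHU : ∀ j, H j ∈ dualCode U := fun j => hHspan ▸ Submodule.subset_span ⟨j, rfl⟩
  have hGH : G * Hᵀ = 0 := mul_transpose_eq_zero_of_mem_dualCode hGU hHU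
  have hHG : H * Gᵀ = 0 := by rw [← transpose_transpose H, ← transpose_mul, hGH, transpose_zero]
  have hsup : U ⊔ dualCode U = ⊤ := by
    refine Submodule.eq_top_of_disjoint _ _ ?_ (disjoint_iff.2 hhull)
    have hk : Module.finrank F U = k := by
      rw [← hGspan, finrank_span_eq_card hGind, Fintype.card_fin]
    have hl : Module.finrank F (dualCode U) = l := by
      rw [← hHspan, finrank_span_eq_card hHind, Fintype.card_fin]
    rw [hk, hl, hn, Module.finrank_fin_fun]
  have hker : ∀ v, G *ᵥ v = 0 → H *ᵥ v = 0 → v = 0 := fun v =>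
    eq_zero_of_mulVec_eq_zero_of_sup_span_eq_top (by rw [hGspan, hHspan, hsup])
  have hGG : IsUnit (G * Gᵀ).det := isUnit_det_mul_transpose hGind fun x hx =>
    hker _ hx (by rw [mulVec_mulVec, hHG, zero_mulVec])
  have hHH : IsUnit (H * Hᵀ).det := isUnit_det_mul_transpose hHind fun x hx =>
    hker _ (by rw [mulVec_mulVec, hGH, zero_mulVec]) hx
  have hright := fromRows_mul_fromCols_transpose_mul_inv hGH hGG hHH
  exact ⟨hright, (mul_eq_one_comm_of_card_eq _ _ _ (by simp [hn])).1 hright⟩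
end
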